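/- arXiv:1505.04463 — 6 statements merged into one kernel-verified Lean document; each statement's English description precedes it below -/
import Mathlib

section
/- Let E be a category with small hom-sets and all finite limits satisfying Giraud's conditions, and let C be the small full subcategory of E on the generating set. For each object C₀ of C, let J(C₀) be the set of sieves S on C₀ (in C) whose member morphisms form a jointly epimorphic family in E. Then J is a Grothendieck topology on C: the maximal sieve on each object is covering, covering sieves are stable under pullback along arbitrary morphisms of C, and the transitivity axiom holds. -/
/-!
A sieve `S` on `C₀` is jointly epimorphic exactly when the induced map `∐ G D ⟶ G C₀` out of
the coproduct of its members is an epimorphism. Every epimorphism is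
regular, so it is the coequalizer of its kernel pair, and this exact fork survives pullback:
epimorphisms are stable under pullback. Since coproducts are stable under pullback too,
jointly epimorphic families are stable under pullback, and covering each pullback
`G D ×_{G C₀} G C₁` by generators gives morphisms of `S.pullback g`.
-/

open CategoryTheory CategoryTheory.Limits

universe v u

namespace Giraud

variable {E : Type u} [Category.{v} E]

def IsExactFork {P M Q : E} (a b : P ⟶ M) (q : M ⟶ Q) : Prop :=
  IsKernelPair q a b ∧ ∃ w : a ≫ q = b ≫ q, Nonempty (IsColimit (Cofork.ofπ q w))

def IsEquivRelPair [HasFiniteLimits E] {P M : E} (a b : P ⟶ M) : Prop :=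
  Mono (prod.lift a b) ∧
  (∃ r : M ⟶ P, r ≫ a = 𝟙 M ∧ r ≫ b = 𝟙 M) ∧
  (∃ s : P ⟶ P, s ≫ a = b ∧ s ≫ b = a) ∧
  (∃ t : pullback b a ⟶ P,
      t ≫ a = pullback.fst b a ≫ a ∧ t ≫ b = pullback.snd b a ≫ b)

structure GiraudAxioms (E : Type u) [Category.{v} E] [HasFiniteLimits E] : Prop where
  hasCoproducts : HasCoproducts.{v} E
  mono_coprojection : ∀ {ι : Type v} (f : ι → E) [HasCoproduct f] (i : ι),
    Mono (Sigma.ι f i)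
  disjoint_coprojections : ∀ {ι : Type v} (f : ι → E) [HasCoproduct f] (i j : ι),
    i ≠ j → Nonempty (IsInitial (pullback (Sigma.ι f i) (Sigma.ι f j)))
  coproducts_stable : ∀ {ι : Type v} (f : ι → E) [HasCoproduct f] {D : E}
    (g : D ⟶ ∐ f),
    Nonempty (IsColimit (Cofan.mk D fun i => pullback.snd (Sigma.ι f i) g))
  epi_isCoequalizer : ∀ {A B : E} (f : A ⟶ B), Epi f →
    ∃ (X : E) (a b : X ⟶ A) (w : a ≫ f = b ≫ f),
      Nonempty (IsColimit (Cofork.ofπ f w))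
  equivRel_effective : ∀ {P M : E} (a b : P ⟶ M), IsEquivRelPair a b →
    ∃ (Q : E) (q : M ⟶ Q) (w : a ≫ q = b ≫ q),
      Nonempty (IsColimit (Cofork.ofπ q w)) ∧ IsKernelPair q a b
  exactForks_stable : ∀ {P M Q Q' : E} (a b : P ⟶ M) (q : M ⟶ Q)
    (w : a ≫ q = b ≫ q), IsKernelPair q a b →
    Nonempty (IsColimit (Cofork.ofπ q w)) → ∀ (g : Q' ⟶ Q),
    IsExactFork
      (pullback.map (a ≫ q) g q g a (𝟙 Q') (𝟙 Q) (by simp) (by simp))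
      (pullback.map (a ≫ q) g q g b (𝟙 Q') (𝟙 Q) (by simp [w]) (by simp))
      (pullback.snd q g)
  has_generators : ∃ (ι : Type v) (G : ι → E),
    ∀ {X Y : E} (u v : X ⟶ Y), u ≠ v → ∃ (i : ι) (h : G i ⟶ X), h ≫ u ≠ h ≫ v

/-- A sieve `S` on an object `C₀` of the full subcategory spanned by the family
`G : ι → E` is a jointly epimorphic family in `E`: two parallel morphisms out of
`G C₀` agreeing after composition with every member of `S` are equal. -/
def IsJointlyEpiSieve {ι : Type v} (G : ι → E) {C₀ : InducedCategory E G}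
    (S : Sieve C₀) : Prop :=
  ∀ ⦃X : E⦄ (u v : (inducedFunctor G).obj C₀ ⟶ X),
    (∀ ⦃D : InducedCategory E G⦄ (f : D ⟶ C₀), S f →
      (inducedFunctor G).map f ≫ u = (inducedFunctor G).map f ≫ v) → u = v

def JointlyEpi {B : E} {A : Type*} {Y : A → E} (f : ∀ a, Y a ⟶ B) : Prop :=
  ∀ ⦃X : E⦄ (u v : B ⟶ X), (∀ a, f a ≫ u = f a ≫ v) → u = v

lemma JointlyEpi.epi_sigmaDesc {A : Type*} {Y : A → E} [HasCoproduct Y] {B : E}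
    {f : ∀ a, Y a ⟶ B} (hf : JointlyEpi f) : Epi (Sigma.desc f) :=
  ⟨fun u v huv => hf u v fun a => by simpa using Sigma.ι Y a ≫= huv⟩

lemma jointlyEpi_of_separating {ι : Type*} {G : ι → E}
    (hG : ∀ {X Y : E} (u v : X ⟶ Y), u ≠ v → ∃ (i : ι) (h : G i ⟶ X), h ≫ u ≠ h ≫ v)
    (X : E) : JointlyEpi (fun k : Σ i, G i ⟶ X => k.2) := by
  intro Y u v huv
  by_contra hne
  obtain ⟨i, k, hk⟩ := hG u v hne
  exact hk (huv ⟨i, k⟩)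

namespace GiraudAxioms

variable [HasFiniteLimits E] (h : GiraudAxioms E)
include h

lemma isRegularEpiCategory : IsRegularEpiCategory E where
  regularEpiOfEpi f hf := by
    obtain ⟨W, a, b, w, ⟨hf⟩⟩ := h.epi_isCoequalizer f hf
    exact ⟨⟨⟨W, a, b, w, hf⟩⟩⟩

lemma epi_pullback_snd {A B B' : E} (f : A ⟶ B) [Epi f] (g : B' ⟶ B) :
    Epi (pullback.snd f g) := by
  have := h.isRegularEpiCategory
  have kp : IsKernelPair f (pullback.fst f f) (pullback.snd f f) := IsPullback.of_hasPullback f f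
  obtain ⟨-, _, ⟨hcoeq⟩⟩ :=
    h.exactForks_stable _ _ f kp.w kp ⟨kp.toCoequalizer (regularEpiOfEpi f)⟩ g
  exact Cofork.IsColimit.epi hcoeq

lemma jointlyEpi_pullback_snd {A : Type v} {Y : A → E} {B B' : E} {f : ∀ a, Y a ⟶ B}
    (hf : JointlyEpi f) (g : B' ⟶ B) : JointlyEpi (fun a => pullback.snd (f a) g) := by
  have := h.hasCoproducts A
  have := hf.epi_sigmaDesc
  have := h.epi_pullback_snd (Sigma.desc f) g
  obtain ⟨hcofan⟩ := h.coproducts_stable Y (pullback.fst (Sigma.desc f) g)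
  intro X u v huv
  rw [← cancel_epi (pullback.snd (Sigma.desc f) g)]
  refine hcofan.hom_ext fun ⟨a⟩ => ?_
  obtain ⟨l, hl⟩ : ∃ l, pullback.snd (Sigma.ι Y a) (pullback.fst (Sigma.desc f) g) ≫
      pullback.snd (Sigma.desc f) g = l ≫ pullback.snd (f a) g :=
    ⟨pullback.lift (pullback.fst _ _) (pullback.snd _ _ ≫ pullback.snd _ _)
        (by rw [← Sigma.ι_desc f a, ← Category.assoc, pullback.condition,
          Category.assoc, pullback.condition, Category.assoc]),
      (pullback.lift_snd _ _ _).symm⟩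
  change pullback.snd (Sigma.ι Y a) _ ≫ _ ≫ u = pullback.snd (Sigma.ι Y a) _ ≫ _ ≫ v
  rw [reassoc_of% hl, reassoc_of% hl]
  exact l ≫= huv a

end GiraudAxioms

section JointlyEpiSieve

variable {ι : Type v} {G : ι → E}

lemma IsJointlyEpiSieve.jointlyEpi {C₀ : InducedCategory E G} {S : Sieve C₀}
    (hS : IsJointlyEpiSieve G S) :
    JointlyEpi (fun a : Σ D : InducedCategory E G, {f : D ⟶ C₀ // S f} => a.2.1.hom) :=
  fun _ u v huv => hS u v fun D f hf => huv ⟨D, f, hf⟩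

lemma isJointlyEpiSieve_top (C₀ : InducedCategory E G) : IsJointlyEpiSieve G (⊤ : Sieve C₀) :=
  fun _ u v huv => by simpa using huv (𝟙 C₀) trivial

lemma IsJointlyEpiSieve.pullback [HasFiniteLimits E] (h : GiraudAxioms E)
    (hG : ∀ {X Y : E} (u v : X ⟶ Y), u ≠ v → ∃ (i : ι) (h : G i ⟶ X), h ≫ u ≠ h ≫ v)
    {C₀ C₁ : InducedCategory E G} {S : Sieve C₀} (hS : IsJointlyEpiSieve G S) (g : C₁ ⟶ C₀) :
    IsJointlyEpiSieve G (S.pullback g) := by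
  intro X u v huv
  refine h.jointlyEpi_pullback_snd hS.jointlyEpi g.hom u v fun a =>
    jointlyEpi_of_separating hG _ _ _ fun ⟨i, k⟩ => ?_
  let D : InducedCategory E G := i
  let m : D ⟶ C₁ := InducedCategory.homMk (k ≫ pullback.snd _ _)
  have hm : S.pullback g m := by
    have hfactor : m ≫ g = InducedCategory.homMk (k ≫ pullback.fst _ _) ≫ a.2.1 := by
      ext
      simp [m, pullback.condition]
    simpa [Sieve.pullback_apply, hfactor] using S.downward_closed a.2.2 _
  simpa [m] using huv m hm

lemma IsJointlyEpiSieve.transitive {C₀ : InducedCategory E G} {S R : Sieve C₀}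
    (hS : IsJointlyEpiSieve G S)
    (hR : ∀ ⦃D : InducedCategory E G⦄ ⦃f : D ⟶ C₀⦄, S f → IsJointlyEpiSieve G (R.pullback f)) :
    IsJointlyEpiSieve G R :=
  fun _ u v huv => hS u v fun D f hf =>
    hR hf _ _ fun D' g hg => by simpa using huv (g ≫ f) hg

end JointlyEpiSieve

/-- The jointly epimorphic sieves form a Grothendieck topology on the generating
subcategory. -/
theorem jointlyEpiSieves_grothendieckTopology [HasFiniteLimits E]
    (h : GiraudAxioms E) {ι : Type v} (G : ι → E)
    (hG : ∀ {X Y : E} (u v : X ⟶ Y), u ≠ v →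
      ∃ (i : ι) (h : G i ⟶ X), h ≫ u ≠ h ≫ v) :
    ∃ J : GrothendieckTopology (InducedCategory E G),
      ∀ (C₀ : InducedCategory E G) (S : Sieve C₀),
        S ∈ J C₀ ↔ IsJointlyEpiSieve G S :=
  ⟨{ sieves := fun C₀ => {S | IsJointlyEpiSieve G S}
     top_mem' := isJointlyEpiSieve_top
     pullback_stable' := fun _ _ _ g hS => hS.pullback h hG g
     transitive' := fun _ _ hS _ hR => hS.transitive hR },
    fun _ _ => Iff.rfl⟩

end Giraud
end

section
/- Let E be a category with all finite limits in which every epimorphism is a coequalizer and every exact fork is stable under pullback. Then epimorphisms in E are stable under pullback: for any epimorphism f : A → C and any morphism g : D → C, the projection A ×_C D → D from the pullback is an epimorphism. -/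
/-!
An epimorphism `f` is a coequalizer, hence the coequalizer of its own kernel pair, so the kernel
pair of `f` together with `f` is an exact fork. Pulling that fork back along `g` gives an exact
fork whose coequalizing map is the projection `pullback.snd f g`, and coequalizers are epimorphic.
-/

open CategoryTheory CategoryTheory.Limits

universe v u

namespace Giraud

variable {E : Type u} [Category.{v} E]

theorem isExactFork_of_isKernelPair {P M Q : E} {a b : P ⟶ M} {q : M ⟶ Q}
    (k : IsKernelPair q a b) [IsRegularEpi q] : IsExactFork a b q :=
  ⟨k, k.w, ⟨k.toCoequalizer'⟩⟩

theorem IsExactFork.epi {P M Q : E} {a b : P ⟶ M} {q : M ⟶ Q} (h : IsExactFork a b q) :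
    Epi q := by
  obtain ⟨-, _, ⟨hq⟩⟩ := h
  exact epi_of_isColimit_cofork hq

theorem epi_stable_under_pullback [HasFiniteLimits E]
    (hepi : ∀ {A B : E} (f : A ⟶ B), Epi f →
      ∃ (X : E) (a b : X ⟶ A) (w : a ≫ f = b ≫ f),
        Nonempty (IsColimit (Cofork.ofπ f w)))
    (hstable : ∀ {P M Q Q' : E} (a b : P ⟶ M) (q : M ⟶ Q)
      (w : a ≫ q = b ≫ q), IsKernelPair q a b →
      Nonempty (IsColimit (Cofork.ofπ q w)) → ∀ (g : Q' ⟶ Q),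
      IsExactFork
        (pullback.map (a ≫ q) g q g a (𝟙 Q') (𝟙 Q) (by simp) (by simp))
        (pullback.map (a ≫ q) g q g b (𝟙 Q') (𝟙 Q) (by simp [w]) (by simp))
        (pullback.snd q g)) :
    ∀ {A C D : E} (f : A ⟶ C), Epi f → ∀ (g : D ⟶ C), Epi (pullback.snd f g) := by
  intro A C D f hf g
  have : IsRegularEpi f := by
    obtain ⟨X, a, b, w, ⟨hc⟩⟩ := hepi f hf
    exact ⟨⟨X, a, b, w, hc⟩⟩
  obtain ⟨k, w, hc⟩ := isExactFork_of_isKernelPair (IsPullback.of_hasPullback f f)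
  exact (hstable _ _ f w k hc g).epi

end Giraud
end

section
/- Let E be a category with small hom-sets and all finite limits satisfying Giraud's conditions, let C be the small full subcategory of E on the generating set, and let J be the Grothendieck topology on C whose covering sieves are exactly the sieves that are jointly epimorphic families in E. Then for every object E₀ of E, the presheaf C₀ ↦ Hom_E(C₀, E₀) on C (with action by precomposition) is a J-sheaf: for every J-covering sieve every matching family has a unique amalgamation. -/
/-!
A compatible family `x` on a jointly epimorphic sieve `S` on `C₀` assembles into
`m : ∐ G D ⟶ E₀` over the epimorphism `e : ∐ G D ⟶ G C₀` induced by the arrows of `S`.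
Since `e` is a coequalizer, `m` descends to the amalgamation `G C₀ ⟶ E₀` once it coequalizes
every pair that `e` coequalizes. Because coproducts are stable under pullback, this may be
checked after splitting the source into pieces on which both maps of the pair factor through
single summands, and there it is the compatibility of `x`.
-/

open CategoryTheory CategoryTheory.Limits

universe v u

namespace Giraud

variable {E : Type u} [Category.{v} E]

section

variable [HasFiniteLimits E]

theorem GiraudAxioms.hom_ext_of_pullback_coprojections (h : GiraudAxioms E) {ι : Type v}
    {f : ι → E} [HasCoproduct f] {D W : E} (g : D ⟶ ∐ f) {u v : D ⟶ W}
    (huv : ∀ i, pullback.snd (Sigma.ι f i) g ≫ u = pullback.snd (Sigma.ι f i) g ≫ v) :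
    u = v :=
  (h.coproducts_stable f g).some.hom_ext fun ⟨i⟩ => huv i

theorem GiraudAxioms.comp_sigmaDesc_eq_of_comp_sigmaDesc_eq (h : GiraudAxioms E)
    {ι : Type v} {f : ι → E} [HasCoproduct f] {B W : E} (e : ∀ i, f i ⟶ B) (m : ∀ i, f i ⟶ W)
    (hem : ∀ i j {Z : E} (q : Z ⟶ f i) (q' : Z ⟶ f j), q ≫ e i = q' ≫ e j →
      q ≫ m i = q' ≫ m j)
    {Z : E} (γ δ : Z ⟶ ∐ f) (hγδ : γ ≫ Sigma.desc e = δ ≫ Sigma.desc e) :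
    γ ≫ Sigma.desc m = δ ≫ Sigma.desc m := by
  refine h.hom_ext_of_pullback_coprojections γ fun i => ?_
  set s := pullback.snd (Sigma.ι f i) γ
  refine h.hom_ext_of_pullback_coprojections (s ≫ δ) fun j => ?_
  set s' := pullback.snd (Sigma.ι f j) (s ≫ δ)
  have hγ : s ≫ γ = pullback.fst (Sigma.ι f i) γ ≫ Sigma.ι f i := pullback.condition.symm
  have hδ : s' ≫ s ≫ δ = pullback.fst (Sigma.ι f j) (s ≫ δ) ≫ Sigma.ι f j :=
    pullback.condition.symm
  have hpiece := hem i j (s' ≫ pullback.fst (Sigma.ι f i) γ) (pullback.fst (Sigma.ι f j) (s ≫ δ))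
    (by simpa [reassoc_of% hγ, reassoc_of% hδ] using s' ≫= s ≫= hγδ)
  simpa [reassoc_of% hγ, reassoc_of% hδ] using hpiece

theorem GiraudAxioms.exists_comp_eq_of_epi (h : GiraudAxioms E) {A B W : E} (e : A ⟶ B)
    [Epi e] (m : A ⟶ W)
    (hm : ∀ {Z : E} (γ δ : Z ⟶ A), γ ≫ e = δ ≫ e → γ ≫ m = δ ≫ m) :
    ∃ t : B ⟶ W, e ≫ t = m := by
  obtain ⟨X, a, b, w, ⟨hc⟩⟩ := h.epi_isCoequalizer e ‹_›
  exact ⟨hc.desc (Cofork.ofπ m (hm a b w)), hc.fac _ .one⟩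

end

section

variable {ι : Type v} {G : ι → E} {C₀ : InducedCategory E G}

theorem IsJointlyEpiSieve.isSeparatedFor {S : Sieve C₀} (hS : IsJointlyEpiSieve G S) (E₀ : E) :
    Presieve.IsSeparatedFor ((inducedFunctor G).op ⋙ yoneda.obj E₀) S.arrows :=
  fun _ _ _ h₁ h₂ => hS _ _ fun _ f hf => (h₁ f hf).trans (h₂ f hf).symm

theorem IsJointlyEpiSieve.epi_sigmaDesc {S : Sieve C₀} (hS : IsJointlyEpiSieve G S)
    [HasCoproduct fun p : Σ D, {f : D ⟶ C₀ // S f} => G p.1] :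
    Epi (Limits.Sigma.desc (f := fun p : Σ D, {f : D ⟶ C₀ // S f} => G p.1)
      fun p => (inducedFunctor G).map p.2.1) :=
  ⟨fun u v huv => hS u v fun D f hf => by simpa using Sigma.ι _ ⟨D, f, hf⟩ ≫= huv⟩

/-- Compatibility extends from test objects of the subcategory to all of `E`: a failure at `Z`
would be detected by some generator mapping to `Z`. -/
theorem comp_eq_of_compatible
    (hG : ∀ {X Y : E} (u v : X ⟶ Y), u ≠ v → ∃ (i : ι) (h : G i ⟶ X), h ≫ u ≠ h ≫ v)
    {E₀ : E} {R : Presieve C₀}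
    {x : Presieve.FamilyOfElements ((inducedFunctor G).op ⋙ yoneda.obj E₀) R}
    (hx : x.Compatible) {D D' : InducedCategory E G} {f : D ⟶ C₀} {f' : D' ⟶ C₀}
    (hf : R f) (hf' : R f') {Z : E} (q : Z ⟶ G D) (q' : Z ⟶ G D')
    (hqq' : q ≫ (inducedFunctor G).map f = q' ≫ (inducedFunctor G).map f') :
    q ≫ x f hf = q' ≫ x f' hf' := by
  by_contra hne
  obtain ⟨i, k, hk⟩ := hG _ _ hne
  let j : InducedCategory E G := i
  let g : j ⟶ D := InducedCategory.homMk (k ≫ q)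
  let g' : j ⟶ D' := InducedCategory.homMk (k ≫ q')
  have hgg' : g ≫ f = g' ≫ f' := InducedCategory.Hom.ext (by simpa [g, g'] using k ≫= hqq')
  exact hk (by simpa [g, g'] using hx g g' hf hf' hgg')

end

/-- For every object `E₀` of `E`, the presheaf `Hom_E(−, E₀)` restricted to the
generating subcategory is a sheaf for the topology of jointly epimorphic sieves. -/
theorem homPresheaf_isSheaf [HasFiniteLimits E]
    (h : GiraudAxioms E) {ι : Type v} (G : ι → E)
    (hG : ∀ {X Y : E} (u v : X ⟶ Y), u ≠ v →
      ∃ (i : ι) (h : G i ⟶ X), h ≫ u ≠ h ≫ v)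
    (J : GrothendieckTopology (InducedCategory E G))
    (hJ : ∀ (C₀ : InducedCategory E G) (S : Sieve C₀),
      S ∈ J C₀ ↔ IsJointlyEpiSieve G S)
    (E₀ : E) :
    Presieve.IsSheaf J ((inducedFunctor G).op ⋙ yoneda.obj E₀) := by
  have := h.hasCoproducts
  intro C₀ S hS
  have hSepi : IsJointlyEpiSieve G S := (hJ C₀ S).mp hS
  refine (IsJointlyEpiSieve.isSeparatedFor hSepi E₀).isSheafFor fun x hx => ?_
  let σ : Type v := Σ D, {f : D ⟶ C₀ // S f}
  have := IsJointlyEpiSieve.epi_sigmaDesc hSepi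
  obtain ⟨t, ht⟩ := h.exists_comp_eq_of_epi _
    (Sigma.desc (f := fun p : σ => G p.1) fun p => x p.2.1 p.2.2)
    (h.comp_sigmaDesc_eq_of_comp_sigmaDesc_eq _ _
      fun (p p' : σ) _ q q' => comp_eq_of_compatible hG hx p.2.2 p'.2.2 q q')
  exact ⟨t, fun D f hf => by simpa using Sigma.ι _ (⟨D, f, hf⟩ : σ) ≫= ht⟩

end Giraud
end

section
/- Let E be a category with small hom-sets and all finite limits satisfying Giraud's conditions, let C be the small full subcategory of E on the generating set, and let A : C ⥤ E be the inclusion. Then the generating subcategory is dense: for every object E₀ of E, the comma category (A ↓ E₀) of pairs (C₀, x : A(C₀) → E₀) together with the canonical cocone from the forgetful diagram (A ↓ E₀) → E (sending (C₀, x) to A(C₀)) exhibits E₀ as the colimit of this diagram. -/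
/-!
Let `p : ∐ G i ⟶ E₀` be the map out of the coproduct indexed by all arrows `x : G i ⟶ E₀`.
It is epi because the `G i` separate, hence a coequalizer of some pair `a, b`. A cocone `s`
over `(A ↓ E₀)` induces `d : ∐ G i ⟶ s.pt`, and cocone morphisms `E₀ ⟶ s.pt` are exactly the
factorizations of `d` through `p`. So it suffices that `a ≫ d = b ≫ d`, and testing on
generators this reduces to `g ≫ d = s(g ≫ p)` for every `g : G k ⟶ ∐ G i`. Pulling the
coproduct back along `g` (stability) covers `G k` by generators whose composite with `g` lands
in a single summand, and there the identity is the naturality of `s`.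
-/

open CategoryTheory CategoryTheory.Limits

universe v u

namespace Giraud

variable {E : Type u} [Category.{v} E]

variable {ι : Type v} (G : ι → E)

/-- The canonical cocone on the forgetful diagram `(A ↓ E₀) ⥤ E`,
`(C₀, x : A C₀ ⟶ E₀) ↦ A C₀`, with apex `E₀` and components the structure
morphisms `x`. -/
@[simps]
def canonicalCocone (E₀ : E) :
    Cocone (CostructuredArrow.proj (inducedFunctor G) E₀ ⋙ inducedFunctor G) where
  pt := E₀
  ι :=
    { app := fun f => f.hom
      naturality := fun f f' g => by
        exact (CostructuredArrow.w g).trans (Category.comp_id _).symm }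

abbrev canonicalDiagram (E₀ : E) : CostructuredArrow (inducedFunctor G) E₀ ⥤ E :=
  CostructuredArrow.proj (inducedFunctor G) E₀ ⋙ inducedFunctor G

abbrev coproductFromFamily (E₀ : E) : (Σ i : ι, G i ⟶ E₀) → E :=
  fun j => G j.1

noncomputable abbrev coproductFrom (E₀ : E) [HasCoproduct (coproductFromFamily G E₀)] :
    ∐ coproductFromFamily G E₀ ⟶ E₀ :=
  Sigma.desc Sigma.snd

variable {G}

lemma isSeparating_ofObj_of_exists_ne
    (hG : ∀ {X Y : E} (u v : X ⟶ Y), u ≠ v → ∃ (i : ι) (h : G i ⟶ X), h ≫ u ≠ h ≫ v) :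
    ObjectProperty.IsSeparating (.ofObj G) := by
  rintro X Y u v huv
  by_contra hne
  obtain ⟨i, e, he⟩ := hG u v hne
  exact he (huv _ ⟨i⟩ e)

lemma epi_coproductFrom (hS : ObjectProperty.IsSeparating (.ofObj G)) (E₀ : E)
    [HasCoproduct (coproductFromFamily G E₀)] : Epi (coproductFrom G E₀) :=
  ⟨fun u v huv => hS u v <| by
    rintro _ ⟨i⟩ e
    simpa using Sigma.ι (coproductFromFamily G E₀) ⟨i, e⟩ ≫= huv⟩

lemma hom_ext_of_factorsThrough_sigma_ι [HasPullbacks E]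
    (hS : ObjectProperty.IsSeparating (.ofObj G)) {J : Type*} {f : J → E} [HasCoproduct f]
    {Y X : E} {g : Y ⟶ ∐ f}
    (hc : IsColimit (Cofan.mk Y fun j => pullback.snd (Sigma.ι f j) g)) {u v : Y ⟶ X}
    (h : ∀ (i : ι) (e : G i ⟶ Y) (j : J) (e' : G i ⟶ f j),
      e ≫ g = e' ≫ Sigma.ι f j → e ≫ u = e ≫ v) :
    u = v := by
  refine hc.hom_ext fun ⟨j⟩ => hS _ _ ?_
  rintro _ ⟨i⟩ e
  simpa using
    h i (e ≫ pullback.snd _ _) j (e ≫ pullback.fst _ _) (by simp [pullback.condition])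

section Cocone

variable {E₀ : E} (s : Cocone (canonicalDiagram G E₀))

lemma comp_ι_app_mk {i k : ι} (e : G i ⟶ G k) (y : G k ⟶ E₀) :
    e ≫ s.ι.app (CostructuredArrow.mk (S := inducedFunctor G) y) =
      s.ι.app (CostructuredArrow.mk (S := inducedFunctor G) (e ≫ y)) :=
  s.w (CostructuredArrow.homMk' (CostructuredArrow.mk (S := inducedFunctor G) y)
    (InducedCategory.homMk (X := i) e))

variable [HasCoproduct (coproductFromFamily G E₀)]

noncomputable def descCoproductFrom : ∐ coproductFromFamily G E₀ ⟶ s.pt :=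
  Sigma.desc fun j => s.ι.app (CostructuredArrow.mk (S := inducedFunctor G) j.2)

lemma ι_descCoproductFrom (j : Σ i : ι, G i ⟶ E₀) :
    Sigma.ι (coproductFromFamily G E₀) j ≫ descCoproductFrom s =
      s.ι.app (CostructuredArrow.mk (S := inducedFunctor G) j.2) :=
  Sigma.ι_desc _ j

lemma comp_descCoproductFrom [HasPullbacks E] (hS : ObjectProperty.IsSeparating (.ofObj G))
    {k : ι} (g : G k ⟶ ∐ coproductFromFamily G E₀)
    (hc : IsColimit (Cofan.mk (G k) fun j =>
      pullback.snd (Sigma.ι (coproductFromFamily G E₀) j) g)) :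
    g ≫ descCoproductFrom s =
      s.ι.app (CostructuredArrow.mk (S := inducedFunctor G) (g ≫ coproductFrom G E₀)) := by
  refine hom_ext_of_factorsThrough_sigma_ι hS hc fun i e j e' he => ?_
  rw [reassoc_of% he, ι_descCoproductFrom, comp_ι_app_mk, comp_ι_app_mk, reassoc_of% he,
    Sigma.ι_desc]

lemma comp_descCoproductFrom_eq_of_comp_coproductFrom_eq [HasPullbacks E]
    (hS : ObjectProperty.IsSeparating (.ofObj G))
    (hstable : ∀ (k : ι) (g : G k ⟶ ∐ coproductFromFamily G E₀),
      Nonempty (IsColimit (Cofan.mk (G k) fun j =>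
        pullback.snd (Sigma.ι (coproductFromFamily G E₀) j) g)))
    {X : E} {a b : X ⟶ ∐ coproductFromFamily G E₀}
    (w : a ≫ coproductFrom G E₀ = b ≫ coproductFrom G E₀) :
    a ≫ descCoproductFrom s = b ≫ descCoproductFrom s := by
  refine hS _ _ ?_
  rintro _ ⟨k⟩ e
  obtain ⟨ha⟩ := hstable k (e ≫ a)
  obtain ⟨hb⟩ := hstable k (e ≫ b)
  have hab : (e ≫ a) ≫ coproductFrom G E₀ = (e ≫ b) ≫ coproductFrom G E₀ := by
    rw [Category.assoc, Category.assoc, w]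
  rw [← Category.assoc, ← Category.assoc, comp_descCoproductFrom s hS _ ha,
    comp_descCoproductFrom s hS _ hb, hab]

lemma isCoconeHom_canonicalCocone_iff (m : E₀ ⟶ s.pt) :
    (∀ j, (canonicalCocone G E₀).ι.app j ≫ m = s.ι.app j) ↔
      coproductFrom G E₀ ≫ m = descCoproductFrom s := by
  constructor
  · intro hm
    refine Sigma.hom_ext _ _ fun j => ?_
    rw [Sigma.ι_desc_assoc, ι_descCoproductFrom]
    exact hm (CostructuredArrow.mk _)
  · intro hm j
    rw [CostructuredArrow.eq_mk j]
    have := Sigma.ι (coproductFromFamily G E₀) ⟨j.left, j.hom⟩ ≫= hm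
    rwa [Sigma.ι_desc_assoc, ι_descCoproductFrom] at this

end Cocone

noncomputable def isColimitCanonicalCocone [HasPullbacks E]
    (hS : ObjectProperty.IsSeparating (.ofObj G)) {E₀ : E}
    [HasCoproduct (coproductFromFamily G E₀)]
    (hstable : ∀ (k : ι) (g : G k ⟶ ∐ coproductFromFamily G E₀),
      Nonempty (IsColimit (Cofan.mk (G k) fun j =>
        pullback.snd (Sigma.ι (coproductFromFamily G E₀) j) g)))
    {X : E} {a b : X ⟶ ∐ coproductFromFamily G E₀}
    (w : a ≫ coproductFrom G E₀ = b ≫ coproductFrom G E₀)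
    (hc : IsColimit (Cofork.ofπ (coproductFrom G E₀) w)) :
    IsColimit (canonicalCocone G E₀) :=
  IsColimit.ofExistsUnique fun s => by
    have hdesc := comp_descCoproductFrom_eq_of_comp_coproductFrom_eq s hS hstable w
    refine ⟨Cofork.IsColimit.desc hc _ hdesc, ?_, fun m hm => ?_⟩
    · exact (isCoconeHom_canonicalCocone_iff s _).2 (Cofork.IsColimit.π_desc' hc _ hdesc)
    · refine Cofork.IsColimit.hom_ext hc ?_
      rw [Cofork.IsColimit.π_desc' hc _ hdesc]
      exact (isCoconeHom_canonicalCocone_iff s m).1 hm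

/-- Under Giraud's conditions the generating subcategory is dense: every object
`E₀` of `E` is the colimit of the canonical diagram `(A ↓ E₀) ⥤ E` via the
canonical cocone. -/
theorem generators_dense [HasFiniteLimits E]
    (h : GiraudAxioms E)
    (hG : ∀ {X Y : E} (u v : X ⟶ Y), u ≠ v →
      ∃ (i : ι) (h : G i ⟶ X), h ≫ u ≠ h ≫ v)
    (E₀ : E) :
    Nonempty (IsColimit (canonicalCocone G E₀)) := by
  have hS := isSeparating_ofObj_of_exists_ne hG
  have := h.hasCoproducts
  obtain ⟨X, a, b, w, ⟨hc⟩⟩ := h.epi_isCoequalizer _ (epi_coproductFrom hS E₀)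
  exact ⟨isColimitCanonicalCocone hS (fun _ g => h.coproducts_stable _ g) w hc⟩

end Giraud
end

section
/- Let (C,J) be a small site and R a commutative ring. In the category Sh(C,J; ModuleCat R) of sheaves of R-modules: (a) every epimorphism is a coequalizer of its kernel pair; (b) every equivalence relation is effective (it is the kernel pair of its coequalizer, which exists); (c) exact forks are stable under pullback; and (d) the category has a small set of generators. -/
/-!
Sheaves of `R`-modules on a small site form an abelian category, where every epimorphism is
normal, hence regular, hence the coequalizer of its kernel pair; epimorphisms and kernel pairs are
stable under pullback. A jointly monic pair `a, b : P ⟶ M` with a common section `r` is the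
kernel pair of `q = coker (a - b)`: the comparison map `u : P ⟶ M ×_Q M` is monic, and it is
epic because `M ×_Q M` is generated by the diagonal, which is `r ≫ u`, and by `ker q = im (a - b)`
placed in the first factor, which is the image of `(𝟙 - b ≫ r) ≫ u`. Sheafifications of the free
presheaves of modules on representables separate morphisms.
-/

open CategoryTheory CategoryTheory.Limits Opposite

universe v

namespace CategoryTheory

theorem IsKernelPair.pullback_snd {D : Type*} [Category D] [HasPullbacks D] {P M Q Q' : D}
    {a b : P ⟶ M} {q : M ⟶ Q} (hkp : IsKernelPair q a b) (g : Q' ⟶ Q) :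
    IsKernelPair (pullback.snd q g)
      (pullback.map (a ≫ q) g q g a (𝟙 Q') (𝟙 Q) (by simp) (by simp))
      (pullback.map (a ≫ q) g q g b (𝟙 Q') (𝟙 Q) (by simp [hkp.w]) (by simp)) :=
  (hkp.pullback g).of_iso (pullbackSymmetry _ _) (pullbackSymmetry _ _) (pullbackSymmetry _ _)
    (Iso.refl _) (by ext <;> simp [pullback.lift_fst, pullback.lift_snd])
    (by ext <;> simp [pullback.lift_fst, pullback.lift_snd]) (by simp) (by simp)

theorem ObjectProperty.IsSeparating.exists_comp_ne {D : Type*} [Category D] {ι : Type*}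
    {G : ι → D} (hG : (ObjectProperty.ofObj G).IsSeparating) {X Y : D} {u v : X ⟶ Y}
    (huv : u ≠ v) : ∃ (i : ι) (f : G i ⟶ X), f ≫ u ≠ f ≫ v := by
  by_contra! h
  exact huv (hG u v (by rintro _ ⟨i⟩ f; exact h i f))

section Abelian

universe w u
variable {A : Type u} [Category.{w} A] [Abelian A]

noncomputable def IsKernelPair.isColimitCoforkOfEpi {P M Q : A} {a b : P ⟶ M} {q : M ⟶ Q}
    [Epi q] (hkp : IsKernelPair q a b) : IsColimit (Cofork.ofπ q hkp.w) :=
  haveI := IsRegularEpiCategory.regularEpiOfEpi q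
  hkp.toCoequalizer'

theorem Limits.pullback.snd_comp_diagonal_add_kernel_lift_comp {M Q : A} (q : M ⟶ Q) :
    pullback.snd q q ≫ pullback.diagonal q +
      kernel.lift q (pullback.fst q q - pullback.snd q q)
          (by rw [Preadditive.sub_comp, pullback.condition, sub_self]) ≫
        pullback.lift (kernel.ι q) 0 (by simp) = 𝟙 _ := by
  apply pullback.hom_ext <;> simp [pullback.lift_fst, pullback.lift_snd]

theorem isKernelPair_cokernel_π_sub {P M : A} (a b : P ⟶ M) [Mono (prod.lift a b)]
    (r : M ⟶ P) (hra : r ≫ a = 𝟙 M) (hrb : r ≫ b = 𝟙 M) :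
    IsKernelPair (cokernel.π (a - b)) a b := by
  set q := cokernel.π (a - b)
  have w : a ≫ q = b ≫ q := by
    rw [← sub_eq_zero, ← Preadditive.sub_comp]
    exact cokernel.condition _
  set u : P ⟶ pullback q q := pullback.lift a b w
  have : Mono u := by
    have : u ≫ prod.lift (pullback.fst q q) (pullback.snd q q) = prod.lift a b := by
      ext <;> simp [u, pullback.lift_fst, pullback.lift_snd]
    exact mono_of_mono_fac this
  have : Epi u := by
    refine Preadditive.epi_of_cancel_zero _ fun {T} g hg => ?_
    have hdiag : pullback.diagonal q ≫ g = 0 := by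
      have : r ≫ u = pullback.diagonal q := by
        ext <;> simp [u, hra, hrb, pullback.lift_fst, pullback.lift_snd]
      rw [← this, Category.assoc, hg, comp_zero]
    have hker : pullback.lift (kernel.ι q) 0 (by simp) ≫ g = 0 := by
      have : (𝟙 P - b ≫ r) ≫ u =
          Abelian.factorThruImage (a - b) ≫ pullback.lift (kernel.ι q) 0 (by simp) := by
        ext
        · simp only [u, Preadditive.sub_comp, Category.assoc, pullback.lift_fst, hra,
            Category.id_comp, Category.comp_id]
          exact (Abelian.image.fac (a - b)).symm
        · simp [u, hrb, pullback.lift_snd]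
      rw [← cancel_epi (Abelian.factorThruImage (a - b)), ← Category.assoc, ← this,
        Category.assoc, hg, comp_zero, comp_zero]
    rw [← Category.id_comp g, ← pullback.snd_comp_diagonal_add_kernel_lift_comp,
      Preadditive.add_comp, Category.assoc, Category.assoc, hdiag, hker, comp_zero, comp_zero,
      add_zero]
  have : IsIso u := isIso_of_mono_of_epi u
  exact IsPullback.of_iso_pullback ⟨w⟩ (asIso u) (pullback.lift_fst _ _ _)
    (pullback.lift_snd _ _ _)

end Abelian

end CategoryTheory

namespace SheafModGiraud

variable {C : Type v} [SmallCategory C] (J : GrothendieckTopology C)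
variable (R : Type v) [CommRing R]

/-- An exact fork in the category of sheaves of `R`-modules. -/
def IsExactFork {P M Q : Sheaf J (ModuleCat.{v} R)} (a b : P ⟶ M) (q : M ⟶ Q) :
    Prop :=
  IsKernelPair q a b ∧ ∃ w : a ≫ q = b ≫ q, Nonempty (IsColimit (Cofork.ofπ q w))

/-- An internal equivalence relation in the category of sheaves of `R`-modules. -/
def IsEquivRelPair {P M : Sheaf J (ModuleCat.{v} R)} (a b : P ⟶ M) : Prop :=
  Mono (prod.lift a b) ∧
  (∃ r : M ⟶ P, r ≫ a = 𝟙 M ∧ r ≫ b = 𝟙 M) ∧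
  (∃ s : P ⟶ P, s ≫ a = b ∧ s ≫ b = a) ∧
  (∃ t : pullback b a ⟶ P,
      t ≫ a = pullback.fst b a ≫ a ∧ t ≫ b = pullback.snd b a ≫ b)

theorem sheaves_of_modules_giraud_conditions :
    -- (a) every epimorphism is the coequalizer of its kernel pair
    (∀ {M N : Sheaf J (ModuleCat.{v} R)} (q : M ⟶ N), Epi q →
      Nonempty (IsColimit (Cofork.ofπ q (pullback.condition (f := q) (g := q))))) ∧
    -- (b) every equivalence relation is effective
    (∀ {P M : Sheaf J (ModuleCat.{v} R)} (a b : P ⟶ M), IsEquivRelPair J R a b →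
      ∃ (Q : Sheaf J (ModuleCat.{v} R)) (q : M ⟶ Q) (w : a ≫ q = b ≫ q),
        Nonempty (IsColimit (Cofork.ofπ q w)) ∧ IsKernelPair q a b) ∧
    -- (c) exact forks are stable under pullback
    (∀ {P M Q Q' : Sheaf J (ModuleCat.{v} R)} (a b : P ⟶ M) (q : M ⟶ Q)
      (w : a ≫ q = b ≫ q), IsKernelPair q a b →
      Nonempty (IsColimit (Cofork.ofπ q w)) → ∀ (g : Q' ⟶ Q),
      IsExactFork J R
        (pullback.map (a ≫ q) g q g a (𝟙 Q') (𝟙 Q) (by simp) (by simp))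
        (pullback.map (a ≫ q) g q g b (𝟙 Q') (𝟙 Q) (by simp [w]) (by simp))
        (pullback.snd q g)) ∧
    -- (d) there is a small set of generators
    (∃ (ι : Type v) (G : ι → Sheaf J (ModuleCat.{v} R)),
      ∀ {F F' : Sheaf J (ModuleCat.{v} R)} (u v : F ⟶ F'), u ≠ v →
        ∃ (i : ι) (f : G i ⟶ F), f ≫ u ≠ f ≫ v) := by
  refine ⟨fun q _ => ⟨(IsKernelPair.of_hasPullback q).isColimitCoforkOfEpi⟩,
    fun a b ⟨_, ⟨r, hra, hrb⟩, _⟩ => ?_, fun a b q w hkp ⟨hq⟩ g => ?_, ?_⟩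
  · have hkp := isKernelPair_cokernel_π_sub a b r hra hrb
    exact ⟨_, _, hkp.w, ⟨hkp.isColimitCoforkOfEpi⟩, hkp⟩
  · have : Epi q := epi_of_isColimit_cofork hq
    have hkp' := hkp.pullback_snd g
    exact ⟨hkp', hkp'.w, ⟨hkp'.isColimitCoforkOfEpi⟩⟩
  · exact ⟨_, _, fun _ _ => (Sheaf.isSeparating J (ModuleCat.isSeparator R)).exists_comp_ne⟩

end SheafModGiraud
end

section
/- Let (C,J) be a small site and R a commutative ring, and let a denote the sheafification functor from presheaves of R-modules to Sh(C,J; ModuleCat R). Then the family {a(R⋅Hom(−,C₀)) : C₀ an object of C} of sheafified free representable presheaves is a small set of generators of Sh(C,J; ModuleCat R): for any distinct parallel morphisms u, v : F → F' of sheaves of R-modules there exist an object C₀ of C and a morphism f : a(R⋅Hom(−,C₀)) → F with u∘f ≠ v∘f. -/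
/-!
Maps `R⋅Hom(−,C₀) ⟶ G` correspond to elements of `G(C₀)` (Yoneda composed with the
free–forgetful adjunction), so the free representable presheaves separate morphisms of
presheaves. Sheafification is left adjoint to the faithful inclusion of sheaves, and such a
left adjoint carries a separating family to a separating family.
-/

open CategoryTheory CategoryTheory.Limits Opposite

universe v

lemma CategoryTheory.ObjectProperty.IsSeparating.ofObj_leftAdjoint
    {C D : Type*} [Category* C] [Category* D] {ι : Type*} {S : ι → C}
    (hS : (ObjectProperty.ofObj S).IsSeparating) {L : C ⥤ D} {G : D ⥤ C} (adj : L ⊣ G)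
    [G.Faithful] : (ObjectProperty.ofObj fun i ↦ L.obj (S i)).IsSeparating := by
  intro X Y f g hfg
  refine G.map_injective (hS _ _ ?_)
  rintro _ ⟨i⟩ a
  apply (adj.homEquiv _ _).symm.injective
  simpa only [← Adjunction.homEquiv_naturality_right_symm] using
    hfg _ (ObjectProperty.ofObj_apply _ i) ((adj.homEquiv _ _).symm a)

namespace SheafModGiraud

variable {C : Type v} [SmallCategory C] (J : GrothendieckTopology C)
variable (R : Type v) [CommRing R]

/-- The free representable presheaf of `R`-modules `R⋅Hom(−,C₀)`. -/
noncomputable def freeRep (C₀ : C) : Cᵒᵖ ⥤ ModuleCat.{v} R :=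
  yoneda.obj C₀ ⋙ ModuleCat.free R

variable {R}

noncomputable def freeRepHomEquiv {C₀ : C} {G : Cᵒᵖ ⥤ ModuleCat.{v} R} :
    (freeRep R C₀ ⟶ G) ≃ G.obj (op C₀) :=
  (((ModuleCat.adj R).whiskerRight Cᵒᵖ).homEquiv (yoneda.obj C₀) G).trans yonedaEquiv

lemma freeRepHomEquiv_comp {C₀ : C} {G G' : Cᵒᵖ ⥤ ModuleCat.{v} R}
    (f : freeRep R C₀ ⟶ G) (u : G ⟶ G') :
    freeRepHomEquiv (f ≫ u) = u.app (op C₀) (freeRepHomEquiv f) := by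
  have := ((ModuleCat.adj R).whiskerRight Cᵒᵖ).homEquiv_naturality_right
    (X := yoneda.obj C₀) f u
  exact (congrArg yonedaEquiv this).trans (yonedaEquiv_comp _ _)

variable (R)

lemma isSeparating_freeRep :
    (ObjectProperty.ofObj (freeRep R : C → Cᵒᵖ ⥤ ModuleCat.{v} R)).IsSeparating := by
  intro F F' u v huv
  ext X x
  obtain ⟨f, rfl⟩ := freeRepHomEquiv.surjective x
  simpa only [freeRepHomEquiv_comp] using
    congrArg freeRepHomEquiv (huv _ (ObjectProperty.ofObj_apply _ X.unop) f)

theorem sheafified_freeRep_generate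
    {F F' : Sheaf J (ModuleCat.{v} R)} (u v : F ⟶ F') (h : u ≠ v) :
    ∃ (C₀ : C)
      (f : (presheafToSheaf J (ModuleCat.{v} R)).obj (freeRep R C₀) ⟶ F),
      f ≫ u ≠ f ≫ v := by
  by_contra! huv
  refine h ((isSeparating_freeRep R).ofObj_leftAdjoint (sheafificationAdjunction J _) u v ?_)
  rintro _ ⟨C₀⟩ f
  exact huv C₀ f

end SheafModGiraud
end
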